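/- If F : X ⊆ ℝⁿ → ℝ is asymmetrically (λ, μ)-Lipschitz continuous on X and z ∈ ℝⁿ \ X, then there exists a ∈ ℝ such that the extension F̃ : X ∪ {z} → ℝ with F̃ = F on X and F̃(z) = a is asymmetrically (λ, μ)-Lipschitz continuous on X ∪ {z}. -/
import Mathlib


/-- The asymmetric distance on `ℝ`: `d_{λ,μ}(t) = λt` for `t ≥ 0` and `-μt` for `t < 0`. -/
noncomputable def dAs (lam mu t : ℝ) : ℝ := if 0 ≤ t then lam * t else -(mu * t)

/-- The asymmetric distance on `ℝⁿ`: `d_{λ,μ}(x,y) = ∑ᵢ d_{λ,μ}(xᵢ - yᵢ)`. -/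
noncomputable def dAsV {n : ℕ} (lam mu : ℝ) (x y : Fin n → ℝ) : ℝ :=
  ∑ i, dAs lam mu (x i - y i)

/-- `F` is asymmetrically `(λ,μ)`-Lipschitz continuous on `X`. -/
def AsymLipschitzOn {n : ℕ} (lam mu : ℝ) (F : (Fin n → ℝ) → ℝ) (X : Set (Fin n → ℝ)) : Prop :=
  ∀ x ∈ X, ∀ y ∈ X, F x - F y ≤ dAsV lam mu x y

lemma dAs_eq_max {lam mu : ℝ} (hlam : 0 < lam) (hmu : 0 < mu) (t : ℝ) :
    dAs lam mu t = max (lam * t) (-(mu * t)) := by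
  unfold dAs
  rcases le_or_gt 0 t with h | h
  · rw [if_pos h, max_eq_left]; nlinarith
  · rw [if_neg (not_le.2 h), max_eq_right]; nlinarith

lemma dAs_add_le {lam mu : ℝ} (hlam : 0 < lam) (hmu : 0 < mu) (s t : ℝ) :
    dAs lam mu (s + t) ≤ dAs lam mu s + dAs lam mu t := by
  rw [dAs_eq_max hlam hmu, dAs_eq_max hlam hmu, dAs_eq_max hlam hmu]
  apply max_le
  · nlinarith [le_max_left (lam * s) (-(mu * s)), le_max_left (lam * t) (-(mu * t))]
  · nlinarith [le_max_right (lam * s) (-(mu * s)), le_max_right (lam * t) (-(mu * t))]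

lemma dAsV_triangle {n : ℕ} {lam mu : ℝ} (hlam : 0 < lam) (hmu : 0 < mu)
    (x y w : Fin n → ℝ) : dAsV lam mu x y ≤ dAsV lam mu x w + dAsV lam mu w y := by
  unfold dAsV
  rw [← Finset.sum_add_distrib]
  apply Finset.sum_le_sum
  intro i _
  have : x i - y i = (x i - w i) + (w i - y i) := by ring
  rw [this]
  exact dAs_add_le hlam hmu _ _

lemma dAsV_self {n : ℕ} (lam mu : ℝ) (x : Fin n → ℝ) : dAsV lam mu x x = 0 := by
  unfold dAsV dAs; simp

/-- One-point extension of an asymmetrically Lipschitz function. -/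
theorem stmt3 (n : ℕ) (lam mu : ℝ) (hlam : 0 < lam) (hmu : 0 < mu)
    (X : Set (Fin n → ℝ)) (z : Fin n → ℝ) (hz : z ∉ X)
    (F : (Fin n → ℝ) → ℝ) (hF : AsymLipschitzOn lam mu F X) :
    ∃ G : (Fin n → ℝ) → ℝ, (∀ x ∈ X, G x = F x) ∧
      AsymLipschitzOn lam mu G (insert z X) := by
  classical
  rcases Set.eq_empty_or_nonempty X with hX | ⟨x0, hx0⟩
  · refine ⟨F, fun x hx => rfl, ?_⟩
    intro x hx y hy
    simp only [hX, Set.mem_insert_iff, Set.mem_empty_iff_false, or_false] at hx hy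
    rw [hx, hy]
    simp [dAsV_self]
  · set S := (fun x => F x - dAsV lam mu x z) '' X with hS
    have hSne : S.Nonempty := ⟨_, x0, hx0, rfl⟩
    have hbdd : BddAbove S := by
      refine ⟨F x0 + dAsV lam mu z x0, ?_⟩
      rintro _ ⟨x, hx, rfl⟩
      dsimp only
      have h1 := hF x hx x0 hx0
      have h2 := dAsV_triangle hlam hmu x x0 z
      linarith
    set a := sSup S with ha
    refine ⟨fun x => if x ∈ X then F x else a, fun x hx => if_pos hx, ?_⟩
    intro x hx y hy
    rcases hx with hx | hx <;> rcases hy with hy | hy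
    · rw [hx, hy]; simp [if_neg hz, dAsV_self]
    · rw [hx]
      simp only [if_neg hz, if_pos hy]
      have : a ≤ F y + dAsV lam mu z y := by
        apply csSup_le hSne
        rintro _ ⟨w, hw, rfl⟩
        dsimp only
        have h1 := hF w hw y hy
        have h2 := dAsV_triangle hlam hmu w y z
        linarith
      linarith [this]
    · rw [hy]
      simp only [if_pos hx, if_neg hz]
      have : F x - dAsV lam mu x z ≤ a := le_csSup hbdd ⟨x, hx, rfl⟩
      linarith
    · simp only [if_pos hx, if_pos hy]
      exact hF x hx y hy
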